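/- Let g : (0,∞) → ℝ be measurable, bounded, and satisfy g(x) = g(qx) for all x > 0, where q = e^{-1/(2k²)}, k > 0. Then for every integer n ≥ 0, ∫₀^∞ xⁿ e^{-k²(log x)²} g(x) dx = C_g · ∫₀^∞ xⁿ e^{-k²(log x)²} dx for a constant C_g independent of n; in particular, if additionally ∫₀^∞ e^{-k²(log x)²} g(x) dx = ∫₀^∞ e^{-k²(log x)²} dx, then all moments of f·g equal those of f, where f(x) = (k/√π)e^{-k²(log x)²}. -/

import Mathlib

open Real MeasureTheory Set

/-- Change of variables `x = exp t` on `(0, ∞)`. -/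
lemma subst_exp (F : ℝ → ℝ) :
    ∫ x in Ioi (0 : ℝ), F x = ∫ t : ℝ, Real.exp t * F (Real.exp t) := by
  have h1 : Ioi (0 : ℝ) = Real.exp '' univ := by rw [image_univ, Real.range_exp]
  rw [h1, integral_image_eq_integral_abs_deriv_smul MeasurableSet.univ
      (fun x _ => (Real.hasDerivAt_exp x).hasDerivWithinAt)
      (Real.exp_injective.injOn), Measure.restrict_univ]
  simp only [smul_eq_mul, Real.abs_exp]

lemma periter (q : ℝ) (hq0 : 0 < q) (h : ℝ → ℝ)
    (hper : ∀ x ∈ Ioi (0 : ℝ), h x = h (q * x)) :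
    ∀ m : ℕ, ∀ x ∈ Ioi (0 : ℝ), h x = h (q ^ m * x) := by
  intro m
  induction m with
  | zero => intro x _; simp
  | succ m ih =>
    intro x hx
    have hqx : q * x ∈ Ioi (0 : ℝ) := mul_pos hq0 hx
    calc h x = h (q * x) := hper x hx
      _ = h (q ^ m * (q * x)) := ih (q * x) hqx
      _ = h (q ^ (m + 1) * x) := by ring_nf

lemma moment_eq (k : ℝ) (hk : 0 < k) (q : ℝ) (hq : q = Real.exp (-1 / (2 * k ^ 2)))
    (h : ℝ → ℝ) (hper : ∀ x ∈ Ioi (0 : ℝ), h x = h (q * x)) (n : ℕ) :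
    ∫ x in Ioi (0 : ℝ), x ^ n * Real.exp (-k ^ 2 * Real.log x ^ 2) * h x
      = Real.exp (((n : ℝ) + 1) ^ 2 / (4 * k ^ 2))
        * ∫ t : ℝ, Real.exp (-k ^ 2 * t ^ 2) * h (Real.exp t) := by
  have hk2 : (k : ℝ) ^ 2 ≠ 0 := pow_ne_zero _ hk.ne'
  set b : ℝ := ((n : ℝ) + 1) / (2 * k ^ 2) with hb
  have hq0 : 0 < q := hq ▸ Real.exp_pos _
  have hkey : ∀ t : ℝ, h (Real.exp (t + b)) = h (Real.exp t) := by
    intro t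
    have h1 := periter q hq0 h hper (n + 1) (Real.exp (t + b)) (Real.exp_pos _)
    rw [h1]
    congr 1
    rw [hq, ← Real.exp_nat_mul, ← Real.exp_add]
    congr 1
    push_cast
    rw [hb]
    ring
  rw [subst_exp]
  have hpt : ∀ t : ℝ,
      Real.exp t * ((Real.exp t) ^ n * Real.exp (-k ^ 2 * Real.log (Real.exp t) ^ 2)
          * h (Real.exp t))
      = Real.exp (((n : ℝ) + 1) ^ 2 / (4 * k ^ 2))
          * (Real.exp (-k ^ 2 * (t - b) ^ 2) * h (Real.exp t)) := by
    intro t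
    rw [Real.log_exp, ← Real.exp_nat_mul]
    rw [show Real.exp t * (Real.exp ((n : ℝ) * t) * Real.exp (-k ^ 2 * t ^ 2) * h (Real.exp t))
        = Real.exp (t + (n : ℝ) * t + -k ^ 2 * t ^ 2) * h (Real.exp t) by
      rw [Real.exp_add, Real.exp_add]; ring]
    rw [show Real.exp (((n : ℝ) + 1) ^ 2 / (4 * k ^ 2))
          * (Real.exp (-k ^ 2 * (t - b) ^ 2) * h (Real.exp t))
        = Real.exp (((n : ℝ) + 1) ^ 2 / (4 * k ^ 2) + -k ^ 2 * (t - b) ^ 2) * h (Real.exp t) by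
      rw [Real.exp_add]; ring]
    congr 2
    rw [hb]
    field_simp
    ring
  simp_rw [hpt]
  rw [MeasureTheory.integral_const_mul]
  congr 1
  rw [← MeasureTheory.integral_add_right_eq_self
      (fun t => Real.exp (-k ^ 2 * (t - b) ^ 2) * h (Real.exp t)) b]
  congr 1
  funext t
  simp only [add_sub_cancel_right, hkey t]

theorem stmt5 (k : ℝ) (hk : 0 < k) (q : ℝ) (hq : q = Real.exp (-1 / (2 * k ^ 2)))
    (g : ℝ → ℝ) (hmeas : Measurable g) (M : ℝ) (hbd : ∀ x ∈ Ioi (0 : ℝ), |g x| ≤ M)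
    (hper : ∀ x ∈ Ioi (0 : ℝ), g x = g (q * x)) :
    ∃ C : ℝ,
      (∀ n : ℕ,
          ∫ x in Ioi (0 : ℝ), x ^ n * Real.exp (-k ^ 2 * Real.log x ^ 2) * g x
            = C * ∫ x in Ioi (0 : ℝ), x ^ n * Real.exp (-k ^ 2 * Real.log x ^ 2)) ∧
      ((∫ x in Ioi (0 : ℝ), Real.exp (-k ^ 2 * Real.log x ^ 2) * g x
          = ∫ x in Ioi (0 : ℝ), Real.exp (-k ^ 2 * Real.log x ^ 2)) →
        ∀ n : ℕ,
          ∫ x in Ioi (0 : ℝ),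
              x ^ n * ((k / Real.sqrt π) * Real.exp (-k ^ 2 * Real.log x ^ 2) * g x)
            = ∫ x in Ioi (0 : ℝ),
                x ^ n * ((k / Real.sqrt π) * Real.exp (-k ^ 2 * Real.log x ^ 2))) := by
  set A : ℝ := ∫ t : ℝ, Real.exp (-k ^ 2 * t ^ 2) * g (Real.exp t) with hA
  set B : ℝ := ∫ t : ℝ, Real.exp (-k ^ 2 * t ^ 2) with hB
  have hBval : B = Real.sqrt (π / k ^ 2) := by
    rw [hB]
    exact integral_gaussian (k ^ 2)
  have hBpos : 0 < B := by
    rw [hBval]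
    exact Real.sqrt_pos.2 (div_pos Real.pi_pos (by positivity))
  have hGn : ∀ n : ℕ,
      ∫ x in Ioi (0 : ℝ), x ^ n * Real.exp (-k ^ 2 * Real.log x ^ 2) * g x
        = Real.exp (((n : ℝ) + 1) ^ 2 / (4 * k ^ 2)) * A :=
    fun n => moment_eq k hk q hq g hper n
  have hOn : ∀ n : ℕ,
      ∫ x in Ioi (0 : ℝ), x ^ n * Real.exp (-k ^ 2 * Real.log x ^ 2)
        = Real.exp (((n : ℝ) + 1) ^ 2 / (4 * k ^ 2)) * B := by
    intro n
    have := moment_eq k hk q hq (fun _ => 1) (fun x _ => rfl) n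
    rw [hB]
    simpa only [mul_one] using this
  have hmain : ∀ n : ℕ,
      ∫ x in Ioi (0 : ℝ), x ^ n * Real.exp (-k ^ 2 * Real.log x ^ 2) * g x
        = (A / B) * ∫ x in Ioi (0 : ℝ), x ^ n * Real.exp (-k ^ 2 * Real.log x ^ 2) := by
    intro n
    rw [hGn n, hOn n]
    field_simp
  refine ⟨A / B, hmain, ?_⟩
  intro heq n
  have h0g : ∫ x in Ioi (0 : ℝ), Real.exp (-k ^ 2 * Real.log x ^ 2) * g x
      = Real.exp (((0 : ℝ) + 1) ^ 2 / (4 * k ^ 2)) * A := by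
    have := hGn 0
    simpa using this
  have h01 : ∫ x in Ioi (0 : ℝ), Real.exp (-k ^ 2 * Real.log x ^ 2)
      = Real.exp (((0 : ℝ) + 1) ^ 2 / (4 * k ^ 2)) * B := by
    have := hOn 0
    simpa using this
  have hAB : A = B := by
    rw [h0g, h01] at heq
    exact mul_left_cancel₀ (Real.exp_ne_zero _) heq
  have hng : ∫ x in Ioi (0 : ℝ), x ^ n * Real.exp (-k ^ 2 * Real.log x ^ 2) * g x
      = ∫ x in Ioi (0 : ℝ), x ^ n * Real.exp (-k ^ 2 * Real.log x ^ 2) := by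
    rw [hGn n, hOn n, hAB]
  have e1 : ∀ x : ℝ, x ^ n * ((k / Real.sqrt π) * Real.exp (-k ^ 2 * Real.log x ^ 2) * g x)
      = (k / Real.sqrt π) * (x ^ n * Real.exp (-k ^ 2 * Real.log x ^ 2) * g x) := by
    intro x; ring
  have e2 : ∀ x : ℝ, x ^ n * ((k / Real.sqrt π) * Real.exp (-k ^ 2 * Real.log x ^ 2))
      = (k / Real.sqrt π) * (x ^ n * Real.exp (-k ^ 2 * Real.log x ^ 2)) := by
    intro x; ring
  simp_rw [e1, e2]
  rw [MeasureTheory.integral_const_mul, MeasureTheory.integral_const_mul, hng]
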